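/- arXiv:2409.10155 — 2 statements merged into one kernel-verified Lean document; each statement's English description precedes it below -/
import Mathlib

section
/- Let UB > 0 and let p_1,…,p_n > 0 be job sizes such that every partition of the jobs into m bags contains a bag of total size at most UB; call a job huge if its size is greater than UB. Let S be a finite set of positive integers and, for each κ ∈ S, let V_κ satisfy 0 < V_κ ≤ UB. Suppose there exists a partition of the jobs into m bags such that for every κ ∈ S the bags can be assigned to κ machines with minimum machine load at least V_κ. Then there exists a partition of the jobs into m bags with the same property in which, moreover, every huge job is alone in its bag and every bag not containing a huge job has total size at most 2·UB. -/
open Finset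

/-- Total size of jobs in bag `b` under partition `σ`. -/
def bagLoad (n m : ℕ) (p : Fin n → ℝ) (σ : Fin n → Fin m) (b : Fin m) : ℝ :=
  ∑ j ∈ Finset.univ.filter (fun j => σ j = b), p j

/-- Potential: sum of squared bag loads. -/
def pot (n m : ℕ) (p : Fin n → ℝ) (σ : Fin n → Fin m) : ℝ :=
  ∑ b, (bagLoad n m p σ b) ^ 2

lemma move_loads {n m : ℕ} (p : Fin n → ℝ) (σ : Fin n → Fin m) (j0 : Fin n) (b' : Fin m)
    (h : b' ≠ σ j0) :
    bagLoad n m p (Function.update σ j0 b') (σ j0) = bagLoad n m p σ (σ j0) - p j0 ∧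
    bagLoad n m p (Function.update σ j0 b') b' = bagLoad n m p σ b' + p j0 ∧
    ∀ c, c ≠ σ j0 → c ≠ b' → bagLoad n m p (Function.update σ j0 b') c = bagLoad n m p σ c := by
  have hfA : Finset.univ.filter (fun j => Function.update σ j0 b' j = σ j0)
      = (Finset.univ.filter (fun j => σ j = σ j0)).erase j0 := by
    ext j
    rcases eq_or_ne j j0 with rfl | hj
    · simp [h]
    · simp [Function.update_of_ne hj, hj]
  have hj0B : j0 ∉ Finset.univ.filter (fun j => σ j = b') := by
    simp only [mem_filter, mem_univ, true_and]
    exact fun hh => h hh.symm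
  have hfB : Finset.univ.filter (fun j => Function.update σ j0 b' j = b')
      = insert j0 (Finset.univ.filter (fun j => σ j = b')) := by
    ext j
    rcases eq_or_ne j j0 with rfl | hj
    · simp
    · simp [Function.update_of_ne hj, hj]
  refine ⟨?_, ?_, ?_⟩
  · unfold bagLoad
    rw [hfA, Finset.sum_erase_eq_sub (by simp)]
  · unfold bagLoad
    rw [hfB, Finset.sum_insert hj0B, add_comm]
  · intro c hc1 hc2
    unfold bagLoad
    congr 1
    ext j
    rcases eq_or_ne j j0 with rfl | hj
    · simp [Ne.symm hc2, Ne.symm hc1]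
    · simp [Function.update_of_ne hj]

lemma move_pot {n m : ℕ} (p : Fin n → ℝ) (σ : Fin n → Fin m) (j0 : Fin n) (b' : Fin m)
    (h : b' ≠ σ j0) (hppos : 0 < p j0)
    (hlt : p j0 + bagLoad n m p σ b' < bagLoad n m p σ (σ j0)) :
    pot n m p (Function.update σ j0 b') < pot n m p σ := by
  obtain ⟨hA, hB, hC⟩ := move_loads p σ j0 b' h
  set L := bagLoad n m p σ (σ j0) with hL
  set L' := bagLoad n m p σ b' with hL'
  have key : ∀ c, (bagLoad n m p (Function.update σ j0 b') c) ^ 2 =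
      (bagLoad n m p σ c) ^ 2 + (if c = σ j0 then (L - p j0) ^ 2 - L ^ 2 else 0)
        + (if c = b' then (L' + p j0) ^ 2 - L' ^ 2 else 0) := by
    intro c
    rcases eq_or_ne c (σ j0) with rfl | h1
    · rw [hA, if_pos rfl, if_neg (Ne.symm h)]
      ring
    rcases eq_or_ne c b' with rfl | h2
    · rw [hB, if_neg h1, if_pos rfl]
      ring
    · rw [hC c h1 h2]
      simp [h1, h2]
  unfold pot
  rw [Finset.sum_congr rfl (fun c _ => key c)]
  simp only [Finset.sum_add_distrib, Finset.sum_ite_eq', mem_univ, if_true]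
  nlinarith [hppos, hlt]

theorem stmt10 (UB : ℝ) (hUB : 0 < UB)
    (n m : ℕ) (hm : 0 < m)
    (p : Fin n → ℝ) (hp : ∀ j, 0 < p j)
    (hpart : ∀ σ : Fin n → Fin m, ∃ b : Fin m,
      (∑ j ∈ Finset.univ.filter (fun j => σ j = b), p j) ≤ UB)
    (S : Finset ℕ) (hS : ∀ κ ∈ S, 0 < κ)
    (V : ℕ → ℝ) (hV : ∀ κ ∈ S, 0 < V κ ∧ V κ ≤ UB)
    (σ₀ : Fin n → Fin m)
    (hσ₀ : ∀ κ ∈ S, ∃ τ : Fin m → Fin κ, ∀ i : Fin κ,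
      V κ ≤ ∑ j ∈ Finset.univ.filter (fun j => τ (σ₀ j) = i), p j) :
    ∃ σ : Fin n → Fin m,
      (∀ κ ∈ S, ∃ τ : Fin m → Fin κ, ∀ i : Fin κ,
        V κ ≤ ∑ j ∈ Finset.univ.filter (fun j => τ (σ j) = i), p j) ∧
      (∀ j j', UB < p j → σ j' = σ j → j' = j) ∧
      (∀ b : Fin m, (∀ j, σ j = b → p j ≤ UB) →
        (∑ j ∈ Finset.univ.filter (fun j => σ j = b), p j) ≤ 2 * UB) := by
  classical
  set Good : (Fin n → Fin m) → Prop := fun σ => ∀ κ ∈ S, ∃ τ : Fin m → Fin κ, ∀ i : Fin κ,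
    V κ ≤ ∑ j ∈ Finset.univ.filter (fun j => τ (σ j) = i), p j with hGoodDef
  have improve : ∀ σ : Fin n → Fin m, Good σ → ∀ j0 : Fin n,
      UB < bagLoad n m p σ (σ j0) - p j0 →
      ∃ σ', Good σ' ∧ pot n m p σ' < pot n m p σ := by
    intro σ hσ j0 hbig
    obtain ⟨b', hb'⟩ := hpart σ
    have hb'load : bagLoad n m p σ b' ≤ UB := hb'
    have hpj0 : 0 < p j0 := hp j0
    have hb'ne : b' ≠ σ j0 := by
      intro hh
      rw [hh] at hb'load
      linarith
    obtain ⟨hA, hB, hC⟩ := move_loads p σ j0 b' hb'ne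
    refine ⟨Function.update σ j0 b', ?_, ?_⟩
    · intro κ hκ
      obtain ⟨τ, hτ⟩ := hσ κ hκ
      refine ⟨τ, fun i => ?_⟩
      by_cases hc : τ (σ j0) = i
      · have h1 : bagLoad n m p (Function.update σ j0 b') (σ j0)
            ≤ ∑ j ∈ Finset.univ.filter (fun j => τ (Function.update σ j0 b' j) = i), p j := by
          apply Finset.sum_le_sum_of_subset_of_nonneg
          · intro j hj
            simp only [mem_filter, mem_univ, true_and] at hj ⊢
            rw [hj]; exact hc
          · exact fun j _ _ => (hp j).le
        have h2 : UB < bagLoad n m p (Function.update σ j0 b') (σ j0) := by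
          rw [hA]; linarith
        have h3 := (hV κ hκ).2
        calc V κ ≤ UB := h3
          _ ≤ _ := by linarith
      · have hsub : Finset.univ.filter (fun j => τ (σ j) = i)
            ⊆ Finset.univ.filter (fun j => τ (Function.update σ j0 b' j) = i) := by
          intro j hj
          simp only [mem_filter, mem_univ, true_and] at hj ⊢
          have hjne : j ≠ j0 := by rintro rfl; exact hc hj
          rwa [Function.update_of_ne hjne]
        calc V κ ≤ _ := hτ i
          _ ≤ _ := Finset.sum_le_sum_of_subset_of_nonneg hsub (fun j _ _ => (hp j).le)
    · exact move_pot p σ j0 b' hb'ne hpj0 (by linarith)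
  obtain ⟨σ, hσmem, hmin⟩ := Finset.exists_min_image
    (Finset.univ.filter fun σ => Good σ) (pot n m p) ⟨σ₀, by simpa using hσ₀⟩
  simp only [mem_filter, mem_univ, true_and] at hσmem
  have hmin' : ∀ σ', Good σ' → pot n m p σ ≤ pot n m p σ' := by
    intro σ' h
    exact hmin σ' (by simpa using h)
  refine ⟨σ, hσmem, ?_, ?_⟩
  · intro j j' hj hjj'
    by_contra hne
    have hpair : ({j, j'} : Finset (Fin n)) ⊆ Finset.univ.filter (fun k => σ k = σ j') := by
      intro k hk
      simp only [mem_insert, mem_singleton] at hk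
      rcases hk with rfl | rfl <;> simp [hjj']
    have hsum : p j + p j' ≤ bagLoad n m p σ (σ j') := by
      have := Finset.sum_le_sum_of_subset_of_nonneg hpair (fun k _ _ => (hp k).le)
      rwa [Finset.sum_pair (fun h => hne h.symm)] at this
    obtain ⟨σ', h1, h2⟩ := improve σ hσmem j' (by linarith)
    exact absurd (hmin' σ' h1) (not_le.mpr h2)
  · intro b hb
    by_contra hgt
    push_neg at hgt
    have hnonempty : (Finset.univ.filter (fun j => σ j = b)).Nonempty := by
      rw [Finset.nonempty_iff_ne_empty]
      intro hemp
      rw [← bagLoad] at hgt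
      unfold bagLoad at hgt
      rw [hemp, Finset.sum_empty] at hgt
      linarith
    obtain ⟨j0, hj0m⟩ := hnonempty
    simp only [mem_filter, mem_univ, true_and] at hj0m
    have hsmall : p j0 ≤ UB := hb j0 hj0m
    obtain ⟨σ', h1, h2⟩ := improve σ hσmem j0 (by
      rw [hj0m]
      show UB < bagLoad n m p σ b - p j0
      unfold bagLoad
      linarith)
    exact absurd (hmin' σ' h1) (not_le.mpr h2)
end

section
/- Let 0 < ε < 1/100 and 0 < LB ≤ UB. Consider the two-stage stochastic Santa Claus setting with probabilities q_κ ≥ 0 satisfying Σ_κ q_κ ≤ 1 and with at least one q_κ > 0, and suppose every job has size at most UB. Suppose there exists a solution (a partition of the jobs into m bags, each bag of total size at most 2·UB, together with an assignment of the bags to the machines in each scenario) whose expected minimum-load value is Z and whose minimum machine load in every scenario in the support of q is at least LB. Then there exists a solution in which every nonempty bag has total job size in the interval [ε·LB, 2.5·UB] and whose expected minimum-load value is at least (1−3ε)·Z. -/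
noncomputable def machineLoad {n m k : ℕ} (p : Fin n → ℝ) (σ₁ : Fin n → Fin m)
    (σ₂ : Fin m → Fin k) (i : Fin k) : ℝ :=
  ∑ j ∈ Finset.univ.filter (fun j => σ₂ (σ₁ j) = i), p j

/-- Minimum machine load (Santa Claus value) of a fixed schedule. -/
noncomputable def minLoad {n m k : ℕ} (p : Fin n → ℝ) (σ₁ : Fin n → Fin m)
    (σ₂ : Fin m → Fin k) : ℝ :=
  ⨅ i : Fin k, machineLoad p σ₁ σ₂ i

noncomputable def bagSize {n m : ℕ} (p : Fin n → ℝ) (σ₁ : Fin n → Fin m) (b : Fin m) : ℝ :=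
  ∑ j ∈ Finset.univ.filter (fun j => σ₁ j = b), p j

/-!
Call a bag small if its size lies strictly between `0` and `d = ε * LB`. If the small bags
weigh less than `d` in total, merge them all into one bag that is not small: no machine loses
more than `d`. Otherwise group the small bags into groups of weight between `d` and `3 * d` and
merge each group into one bag. In every scenario the groups can be handed out so that each
machine receives at least the small load it used to carry minus `3 * d`: fill the machines one
after another with as many groups as fit. A loss of `3 * ε * LB` per machine costs at most a
`3 * ε` fraction of a minimum load that is at least `LB`.
-/

open Finset

theorem exists_assignment_sub_le_sum {ι α : Type*} [DecidableEq ι] [Nonempty ι] {c : ℝ}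
    (hc : 0 ≤ c) (s : ι → ℝ) (hs : ∀ i, 0 ≤ s i) (u : α → ℝ) (I : Finset ι) :
    ∀ R : Finset α, (∀ r ∈ R, 0 ≤ u r ∧ u r ≤ c) → ∑ i ∈ I, s i ≤ ∑ r ∈ R, u r →
      ∃ a : α → ι, ∀ i ∈ I, s i - c ≤ ∑ r ∈ R with a r = i, u r := by
  classical
  induction I using Finset.induction_on with
  | empty => exact fun _ _ _ => ⟨fun _ => Classical.arbitrary ι, by simp⟩
  | insert i I hi ih =>
    intro R hu hsum
    rw [sum_insert hi] at hsum
    have hsI : 0 ≤ ∑ j ∈ I, s j := sum_nonneg fun j _ => hs j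
    -- Machine `i` takes as many items as fit into `s i`; an item left over would overflow.
    obtain ⟨T, hT, hTmax⟩ := exists_max_image (R.powerset.filter fun T => ∑ r ∈ T, u r ≤ s i)
      card ⟨∅, by simp [hs i]⟩
    rw [mem_filter, mem_powerset] at hT
    have hTi : s i - c ≤ ∑ r ∈ T, u r := by
      by_cases hRT : R ⊆ T
      · rw [hT.1.antisymm hRT]
        linarith
      obtain ⟨j, hjR, hjT⟩ := not_subset.mp hRT
      by_contra! h
      have := hTmax (insert j T) (by
        rw [mem_filter, mem_powerset, sum_insert hjT]
        exact ⟨insert_subset hjR hT.1, by linarith [(hu j hjR).2]⟩)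
      rw [card_insert_of_notMem hjT] at this
      omega
    obtain ⟨a, ha⟩ := ih (R \ T) (fun r hr => hu r (sdiff_subset hr))
      (by rw [sum_sdiff_eq_sub hT.1]; linarith)
    refine ⟨fun r => if r ∈ T then i else a r, fun i' hi' => ?_⟩
    rcases mem_insert.mp hi' with rfl | hi'I
    · refine hTi.trans (sum_le_sum_of_subset_of_nonneg (fun r hr => ?_) fun r hr _ => ?_)
      · simp [hT.1 hr, hr]
      · exact (hu r (mem_filter.mp hr).1).1
    · have hne : i' ≠ i := by rintro rfl; exact hi hi'I
      convert ha i' hi'I using 2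
      ext r
      by_cases hr : r ∈ T <;> simp [hr, hne.symm]

theorem exists_grouping {β : Type*} [DecidableEq β] (w : β → ℝ) {d : ℝ} (hd : 0 < d)
    (B : Finset β) (hB : ∀ b ∈ B, w b < d) (hsum : d ≤ ∑ b ∈ B, w b) :
    ∃ g : β → β, (∀ b ∈ B, g b ∈ B) ∧
      ∀ b ∈ B, d ≤ ∑ c ∈ B with g c = g b, w c ∧ ∑ c ∈ B with g c = g b, w c ≤ 3 * d := by
  induction B using Finset.strongInduction with
  | H B ih =>
  by_cases hB3 : ∑ b ∈ B, w b ≤ 3 * d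
  · obtain ⟨b₀, hb₀⟩ := nonempty_of_sum_ne_zero (by linarith : ∑ b ∈ B, w b ≠ 0)
    exact ⟨fun _ => b₀, fun _ _ => hb₀, fun _ _ => by simpa using ⟨hsum, hB3⟩⟩
  -- Split off a set `T` of weight at least `d` with as few items as possible;
  -- dropping any item takes it below `d`, so its weight is below `2 * d`.
  obtain ⟨T, hT, hTmin⟩ := exists_min_image (B.powerset.filter fun T => d ≤ ∑ b ∈ T, w b)
    card ⟨B, by simpa using hsum⟩
  rw [mem_filter, mem_powerset] at hT
  obtain ⟨t, ht⟩ := nonempty_of_sum_ne_zero (by linarith [hT.2] : ∑ b ∈ T, w b ≠ 0)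
  have hT2 : ∑ b ∈ T, w b < 2 * d := by
    have hTt : ∑ b ∈ T.erase t, w b < d := by
      by_contra! h
      have := hTmin (T.erase t) (by simpa using ⟨(erase_subset t T).trans hT.1, h⟩)
      rw [card_erase_of_mem ht] at this
      have := card_pos.mpr ⟨t, ht⟩
      omega
    rw [← add_sum_erase T w ht]
    linarith [hB t (hT.1 ht)]
  obtain ⟨g, hgB, hg⟩ := ih (B \ T) (sdiff_ssubset hT.1 ⟨t, ht⟩)
    (fun b hb => hB b (sdiff_subset hb)) (by rw [sum_sdiff_eq_sub hT.1]; linarith)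
  have hgT : ∀ c ∈ B \ T, g c ∉ T := fun c hc => (mem_sdiff.mp (hgB c hc)).2
  refine ⟨fun c => if c ∈ T then t else g c, fun b hb => ?_, fun b hb => ?_⟩
  · have := hgB b
    have := hT.1 ht
    grind
  by_cases hbT : b ∈ T
  · have hfib : B.filter (fun c => (if c ∈ T then t else g c) = if b ∈ T then t else g b) = T := by
      ext c
      have := hgT c
      grind
    rw [hfib]
    exact ⟨hT.2, by linarith⟩
  · have hfib : B.filter (fun c => (if c ∈ T then t else g c) = if b ∈ T then t else g b) =
        (B \ T).filter (fun c => g c = g b) := by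
      ext c
      have := hgT b
      grind
    rw [hfib]
    exact hg b (mem_sdiff.mpr ⟨hb, hbT⟩)

theorem exists_reassignment_of_grouping {β ι : Type*} [DecidableEq β] [Fintype ι]
    [DecidableEq ι] [Nonempty ι] (w : β → ℝ) (hw : ∀ b, 0 ≤ w b) {c : ℝ} (hc : 0 ≤ c)
    (S : Finset β) (g : β → β) (hgS : ∀ b ∈ S, g b ∈ S)
    (hg : ∀ b ∈ S, ∑ x ∈ S with g x = g b, w x ≤ c) (τ : β → ι) :
    ∃ τ' : β → ι, (∀ b ∉ S, τ' b = τ b) ∧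
      ∀ i, ∑ b ∈ S with τ b = i, w b - c ≤ ∑ b ∈ S with τ' (g b) = i, w b := by
  set R := S.image g
  set u : β → ℝ := fun r => ∑ b ∈ S with g b = r, w b
  have hu : ∀ r ∈ R, 0 ≤ u r ∧ u r ≤ c := by
    intro r hr
    obtain ⟨b, hb, rfl⟩ := mem_image.mp hr
    exact ⟨sum_nonneg fun x _ => hw x, hg b hb⟩
  obtain ⟨a, ha⟩ := exists_assignment_sub_le_sum hc (fun i => ∑ b ∈ S with τ b = i, w b)
    (fun i => sum_nonneg fun b _ => hw b) u univ R hu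
    (by rw [sum_fiberwise, sum_fiberwise_of_maps_to fun b hb => mem_image_of_mem g hb])
  refine ⟨R.piecewise a τ, fun b hb => piecewise_eq_of_notMem _ _ _ fun h => ?_, fun i => ?_⟩
  · obtain ⟨x, hx, rfl⟩ := mem_image.mp h
    exact hb (hgS x hx)
  refine (ha i (mem_univ i)).trans (le_of_eq ?_)
  rw [← sum_fiberwise_of_maps_to (g := g) (t := R.filter (a · = i))
    (s := S.filter fun b => R.piecewise a τ (g b) = i) fun b hb => by
      obtain ⟨hbS, hbi⟩ := mem_filter.mp hb
      rw [piecewise_eq_of_mem _ _ _ (mem_image_of_mem g hbS)] at hbi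
      exact mem_filter.mpr ⟨mem_image_of_mem g hbS, hbi⟩]
  refine sum_congr rfl fun r hr => sum_congr ?_ fun _ _ => rfl
  ext b
  have := piecewise_eq_of_mem R a τ (mem_filter.mp hr).1
  grind

section Regrouping

variable {β : Type*} [Fintype β] (w : β → ℝ)

noncomputable def smallBags (d : ℝ) : Finset β := univ.filter fun b => 0 < w b ∧ w b < d

theorem le_of_notMem_smallBags {w : β → ℝ} {d : ℝ} {b : β} (hb : b ∉ smallBags w d)
    (hwb : 0 < w b) : d ≤ w b := by
  by_contra! h
  exact hb (by simp [smallBags, hwb, h])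

variable [DecidableEq β]

/-- Bag `b` is merged into bag `f b`; a map `τ : β → ι` is a second-stage assignment of bags
to machines. -/
def IsRegrouping (L U δ : ℝ) (f : β → β) : Prop :=
  (∀ b, 0 < ∑ c with f c = b, w c →
    L ≤ ∑ c with f c = b, w c ∧ ∑ c with f c = b, w c ≤ U) ∧
  ∀ {ι : Type} [Fintype ι] [DecidableEq ι] (τ : β → ι), ∃ τ' : β → ι,
    ∀ i, ∑ b with τ b = i, w b - δ ≤ ∑ b with τ' (f b) = i, w b

theorem IsRegrouping.mono_loss {w : β → ℝ} {L U δ δ' : ℝ} {f : β → β}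
    (hf : IsRegrouping w L U δ f) (hδ : δ ≤ δ') : IsRegrouping w L U δ' f := by
  refine ⟨hf.1, fun τ => ?_⟩
  obtain ⟨τ', hτ'⟩ := hf.2 τ
  exact ⟨τ', fun i => by linarith [hτ' i]⟩

theorem sum_fiber_piecewise (S : Finset β) (g : β → β) (b : β) :
    ∑ c with S.piecewise g id c = b, w c =
      ∑ c ∈ S with g c = b, w c + if b ∈ S then 0 else w b := by
  rw [← sum_filter_add_sum_filter_not _ (· ∈ S)]
  congr 1
  · apply sum_congr _ fun _ _ => rfl
    ext c
    by_cases hc : c ∈ S <;> simp [hc]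
  · split_ifs with hb
    · refine sum_eq_zero fun c hc => ?_
      grind [piecewise_eq_of_notMem]
    · convert sum_singleton w b
      ext c
      grind [piecewise_eq_of_notMem]

theorem sub_le_sum_fiber_comp_piecewise {ι : Type*} [DecidableEq ι] (S : Finset β) (g : β → β)
    {τ τ' : β → ι} (hτ' : ∀ b ∉ S, τ' b = τ b) (i : ι) {δ : ℝ}
    (h : ∑ b ∈ S with τ b = i, w b - δ ≤ ∑ b ∈ S with τ' (g b) = i, w b) :
    ∑ b with τ b = i, w b - δ ≤ ∑ b with τ' (S.piecewise g id b) = i, w b := by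
  rw [← sum_filter_add_sum_filter_not _ (· ∈ S),
    ← sum_filter_add_sum_filter_not (univ.filter fun b => τ' (S.piecewise g id b) = i) (· ∈ S)]
  have hS : ∀ P : β → Prop, [DecidablePred P] →
      ((univ.filter P).filter (· ∈ S)) = S.filter P := fun P _ => by ext; simp [and_comm]
  have hSc : (univ.filter fun b => τ' (S.piecewise g id b) = i).filter (· ∉ S) =
      (univ.filter fun b => τ b = i).filter (· ∉ S) := by
    ext b
    by_cases hb : b ∈ S <;> simp [hb, hτ']
  have hSg : S.filter (fun b => τ' (S.piecewise g id b) = i) = S.filter fun b => τ' (g b) = i :=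
    filter_congr fun b hb => by rw [piecewise_eq_of_mem _ _ _ hb]
  rw [hS, hS, hSc, hSg]
  linarith

theorem exists_isRegrouping_of_sum_smallBags_lt {d M : ℝ} (hw : ∀ b, 0 ≤ w b)
    (hM : ∀ b, w b ≤ M) (htot : d ≤ ∑ b, w b) (hS : ∑ b ∈ smallBags w d, w b < d) :
    ∃ f, IsRegrouping w d (M + d) d f := by
  set S := smallBags w d
  have hS0 : 0 ≤ ∑ b ∈ S, w b := sum_nonneg fun b _ => hw b
  obtain ⟨b₀, hb₀, hwb₀⟩ : ∃ b₀ ∈ univ \ S, 0 < w b₀ := by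
    refine exists_lt_of_sum_lt ?_
    rw [sum_const_zero, sum_sdiff_eq_sub (subset_univ S)]
    linarith
  have hb₀S : b₀ ∉ S := (mem_sdiff.mp hb₀).2
  refine ⟨S.piecewise (fun _ => b₀) id, fun b hb => ?_, fun τ => ⟨τ, fun i => ?_⟩⟩
  · rw [sum_fiber_piecewise] at hb ⊢
    by_cases hbb : b = b₀
    · subst hbb
      simp only [filter_true, hb₀S, if_false]
      have := le_of_notMem_smallBags hb₀S hwb₀
      constructor <;> linarith [hM b]
    · have hne : b₀ ≠ b := Ne.symm hbb
      by_cases hbS : b ∈ S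
      · simp [hne, hbS] at hb
      · simp only [hne, filter_false, sum_empty, hbS, if_false, zero_add] at hb ⊢
        exact ⟨le_of_notMem_smallBags hbS hb, by linarith [hM b]⟩
  · refine sub_le_sum_fiber_comp_piecewise w S _ (fun _ _ => rfl) i ?_
    have hle : ∑ b ∈ S with τ b = i, w b ≤ ∑ b ∈ S, w b :=
      sum_le_sum_of_subset_of_nonneg (filter_subset _ _) fun b _ _ => hw b
    have h0 : 0 ≤ ∑ b ∈ S with τ b₀ = i, w b := sum_nonneg fun b _ => hw b
    linarith

theorem exists_isRegrouping_of_le_sum_smallBags {d M : ℝ} (hw : ∀ b, 0 ≤ w b)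
    (hd : 0 < d) (hM : ∀ b, w b ≤ M) (h2d : 2 * d ≤ M) (hS : d ≤ ∑ b ∈ smallBags w d, w b) :
    ∃ f, IsRegrouping w d (M + d) (3 * d) f := by
  set S := smallBags w d
  obtain ⟨g, hgS, hg⟩ := exists_grouping w hd S (fun b hb => (mem_filter.mp hb).2.2) hS
  refine ⟨S.piecewise g id, fun b hb => ?_, fun {ι} _ _ τ => ?_⟩
  · rw [sum_fiber_piecewise] at hb ⊢
    by_cases hbS : b ∈ S
    · simp only [hbS, if_true, add_zero] at hb ⊢
      obtain ⟨c, hc⟩ := nonempty_of_sum_ne_zero hb.ne'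
      rw [mem_filter] at hc
      rw [← hc.2]
      exact ⟨(hg c hc.1).1, by linarith [(hg c hc.1).2]⟩
    · have hempty : S.filter (g · = b) = ∅ :=
        filter_eq_empty_iff.mpr fun c hc hgc => hbS (hgc ▸ hgS c hc)
      simp only [hempty, sum_empty, hbS, if_false, zero_add] at hb ⊢
      exact ⟨le_of_notMem_smallBags hbS hb, by linarith [hM b]⟩
  · obtain ⟨b₀, -⟩ := nonempty_of_sum_ne_zero (by linarith : ∑ b ∈ S, w b ≠ 0)
    have : Nonempty ι := ⟨τ b₀⟩
    obtain ⟨τ', hτ'S, hτ'⟩ := exists_reassignment_of_grouping w hw (by linarith) S g hgS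
      (fun b hb => (hg b hb).2) τ
    exact ⟨τ', fun i => sub_le_sum_fiber_comp_piecewise w S g hτ'S i (hτ' i)⟩

theorem exists_isRegrouping {d M : ℝ} (hw : ∀ b, 0 ≤ w b) (hd : 0 < d)
    (hM : ∀ b, w b ≤ M) (h2d : 2 * d ≤ M) (htot : d ≤ ∑ b, w b) :
    ∃ f, IsRegrouping w d (M + d) (3 * d) f := by
  by_cases hS : ∑ b ∈ smallBags w d, w b < d
  · obtain ⟨f, hf⟩ := exists_isRegrouping_of_sum_smallBags_lt w hw hM htot hS
    exact ⟨f, hf.mono_loss (by linarith)⟩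
  · exact exists_isRegrouping_of_le_sum_smallBags w hw hd hM h2d (not_lt.mp hS)

end Regrouping

section Schedules

variable {n m : ℕ} (p : Fin n → ℝ) (σ₁ : Fin n → Fin m)

theorem machineLoad_eq_sum_bagSize {k : ℕ} (τ : Fin m → Fin k) (i : Fin k) :
    machineLoad p σ₁ τ i = ∑ b with τ b = i, bagSize p σ₁ b := by
  simp only [machineLoad, bagSize]
  rw [sum_fiberwise_eq_sum_filter]
  congr 1
  ext j
  simp

theorem bagSize_comp (f : Fin m → Fin m) (b : Fin m) :
    bagSize p (f ∘ σ₁) b = ∑ c with f c = b, bagSize p σ₁ c := by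
  simp only [bagSize]
  rw [sum_fiberwise_eq_sum_filter]
  congr 1
  ext j
  simp

theorem machineLoad_comp {k : ℕ} (f : Fin m → Fin m) (τ : Fin m → Fin k) (i : Fin k) :
    machineLoad p (f ∘ σ₁) τ i = machineLoad p σ₁ (τ ∘ f) i := rfl

variable {p σ₁}

theorem bagSize_nonneg (hp : ∀ j, 0 ≤ p j) (b : Fin m) : 0 ≤ bagSize p σ₁ b :=
  sum_nonneg fun j _ => hp j

theorem bagSize_pos (hp : ∀ j, 0 < p j) {j : Fin n} {b : Fin m} (hj : σ₁ j = b) :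
    0 < bagSize p σ₁ b :=
  (hp j).trans_le (single_le_sum (fun j _ => (hp j).le) (by simpa using hj))

theorem minLoad_le_machineLoad {k : ℕ} (τ : Fin m → Fin k) (i : Fin k) :
    minLoad p σ₁ τ ≤ machineLoad p σ₁ τ i :=
  ciInf_le (Finite.bddBelow_range _) i

theorem minLoad_le_sum_bagSize (hp : ∀ j, 0 ≤ p j) {k : ℕ} (τ : Fin m → Fin (k + 1)) :
    minLoad p σ₁ τ ≤ ∑ b, bagSize p σ₁ b := by
  refine (minLoad_le_machineLoad τ 0).trans ?_
  rw [machineLoad_eq_sum_bagSize]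
  exact sum_le_sum_of_subset_of_nonneg (filter_subset _ _) fun b _ _ => bagSize_nonneg hp b

theorem minLoad_sub_le_minLoad {k : ℕ} {σ₁' : Fin n → Fin m} {τ τ' : Fin m → Fin (k + 1)}
    {δ : ℝ} (h : ∀ i, machineLoad p σ₁ τ i - δ ≤ machineLoad p σ₁' τ' i) :
    minLoad p σ₁ τ - δ ≤ minLoad p σ₁' τ' :=
  le_ciInf fun i => (sub_le_sub_right (minLoad_le_machineLoad τ i) δ).trans (h i)

end Schedules

theorem stmt11_general (ε LB UB : ℝ) (hε : 0 < ε) (hε1 : ε < 1 / 100)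
    (hLB : 0 < LB) (hLBUB : LB ≤ UB)
    (n m : ℕ)
    (p : Fin n → ℝ) (hp : ∀ j, 0 < p j)
    (q : Fin m → ℝ) (hq : ∀ κ, 0 ≤ q κ) (hqpos : ∃ κ, 0 < q κ)
    (σ₁ : Fin n → Fin m) (σ₂ : (κ : Fin m) → Fin m → Fin (κ.val + 1))
    (hbag : ∀ b : Fin m, bagSize p σ₁ b ≤ 2 * UB)
    (Z : ℝ) (hZ : Z = ∑ κ : Fin m, q κ * minLoad p σ₁ (σ₂ κ))
    (hsupp : ∀ κ : Fin m, 0 < q κ → LB ≤ minLoad p σ₁ (σ₂ κ)) :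
    ∃ (σ₁' : Fin n → Fin m) (σ₂' : (κ : Fin m) → Fin m → Fin (κ.val + 1)),
      (∀ b : Fin m, (∃ j, σ₁' j = b) →
        ε * LB ≤ bagSize p σ₁' b ∧ bagSize p σ₁' b ≤ (5 / 2) * UB) ∧
      (1 - 3 * ε) * Z ≤ ∑ κ : Fin m, q κ * minLoad p σ₁' (σ₂' κ) := by
  have hp0 : ∀ j, 0 ≤ p j := fun j => (hp j).le
  obtain ⟨κ₀, hκ₀⟩ := hqpos
  obtain ⟨f, hsize, hloss⟩ := exists_isRegrouping (bagSize p σ₁) (bagSize_nonneg hp0)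
    (mul_pos hε hLB) hbag (by nlinarith)
    (by nlinarith [hsupp κ₀ hκ₀, minLoad_le_sum_bagSize hp0 (σ₁ := σ₁) (σ₂ κ₀)])
  choose τ hτ using fun κ => hloss (σ₂ κ)
  refine ⟨f ∘ σ₁, τ, fun b ⟨j, hj⟩ => ?_, ?_⟩
  · obtain ⟨hlow, hup⟩ := hsize b (bagSize_comp p σ₁ f b ▸ bagSize_pos hp hj)
    rw [bagSize_comp]
    exact ⟨hlow, by nlinarith⟩
  rw [hZ, mul_sum]
  refine sum_le_sum fun κ _ => ?_
  have hmin : minLoad p σ₁ (σ₂ κ) - 3 * (ε * LB) ≤ minLoad p (f ∘ σ₁) (τ κ) :=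
    minLoad_sub_le_minLoad fun i => by
      rw [machineLoad_comp, machineLoad_eq_sum_bagSize, machineLoad_eq_sum_bagSize]
      exact hτ κ i
  rcases (hq κ).eq_or_lt with hq0 | hqκ
  · simp [← hq0]
  · calc (1 - 3 * ε) * (q κ * minLoad p σ₁ (σ₂ κ))
        ≤ q κ * (minLoad p σ₁ (σ₂ κ) - 3 * (ε * LB)) := by
          nlinarith [mul_le_mul_of_nonneg_left (hsupp κ hqκ) (mul_nonneg hε.le hqκ.le)]
      _ ≤ q κ * minLoad p (f ∘ σ₁) (τ κ) := mul_le_mul_of_nonneg_left hmin hqκ.le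

theorem stmt11 (ε LB UB : ℝ) (hε : 0 < ε) (hε1 : ε < 1 / 100)
    (hLB : 0 < LB) (hLBUB : LB ≤ UB)
    (n m : ℕ) (hn : 0 < n) (hm : 2 ≤ m)
    (p : Fin n → ℝ) (hp : ∀ j, 0 < p j) (hpUB : ∀ j, p j ≤ UB)
    (q : Fin m → ℝ) (hq : ∀ κ, 0 ≤ q κ) (hq1 : ∑ κ, q κ ≤ 1) (hqpos : ∃ κ, 0 < q κ)
    (σ₁ : Fin n → Fin m) (σ₂ : (κ : Fin m) → Fin m → Fin (κ.val + 1))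
    (hbag : ∀ b : Fin m, bagSize p σ₁ b ≤ 2 * UB)
    (Z : ℝ) (hZ : Z = ∑ κ : Fin m, q κ * minLoad p σ₁ (σ₂ κ))
    (hsupp : ∀ κ : Fin m, 0 < q κ → LB ≤ minLoad p σ₁ (σ₂ κ)) :
    ∃ (σ₁' : Fin n → Fin m) (σ₂' : (κ : Fin m) → Fin m → Fin (κ.val + 1)),
      (∀ b : Fin m, (∃ j, σ₁' j = b) →
        ε * LB ≤ bagSize p σ₁' b ∧ bagSize p σ₁' b ≤ (5 / 2) * UB) ∧
      (1 - 3 * ε) * Z ≤ ∑ κ : Fin m, q κ * minLoad p σ₁' (σ₂' κ) :=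
  stmt11_general ε LB UB hε hε1 hLB hLBUB n m p hp q hq hqpos σ₁ σ₂ hbag Z hZ hsupp
end
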